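/- Let C₅ = ⟨g⟩ be cyclic of order 5, F = ⟨x⟩ free of rank 1, and consider the element r = x · (g x⁻¹ g⁻¹) · (g² x g⁻²) of the free product C₅ * F. Then r lies in the normal closure N of {x} in C₅ * F, and the image of r in ℤ[C₅] under the map sending a product of conjugates ∏ₖ gₖ x^{εₖ} gₖ⁻¹ (with gₖ ∈ C₅) to Σₖ εₖ gₖ equals 1 − g + g², which is a unit of ℤ[C₅]. -/

import Mathlib

theorem Subgroup.list_prod_conj_zpow_mem_normalClosure {G : Type*} [Group G] (x : G) {n : ℕ}
    (c : Fin n → G) (ε : Fin n → ℤ) :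
    (List.ofFn fun k => c k * x ^ ε k * (c k)⁻¹).prod ∈ Subgroup.normalClosure {x} := by
  refine list_prod_mem fun y hy => ?_
  obtain ⟨k, rfl⟩ := List.mem_ofFn.mp hy
  have hx : x ∈ Subgroup.normalClosure {x} := Subgroup.subset_normalClosure rfl
  exact Subgroup.normalClosure_normal.conj_mem _ (zpow_mem hx _) _

-- `(1 - a + a²)(a + a² - a⁴) = 1 + a - a⁶`, which is `1` once `a⁵ = 1`.
theorem isUnit_one_sub_add_sq_of_pow_five_eq_one {R : Type*} [CommRing R] {a : R}
    (ha : a ^ 5 = 1) : IsUnit (1 - a + a ^ 2) :=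
  IsUnit.of_mul_eq_one (a + a ^ 2 - a ^ 4) (by linear_combination (1 - a) * ha)

/-- in `C₅ ∗ ⟨x⟩`, the element `r = x (g x⁻¹ g⁻¹) (g² x g⁻²)` lies in the
normal closure of `{x}`, is the product of conjugates with data `(1,1), (g,−1), (g²,1)`,
and the associated group ring element `1 − g + g²` is a unit of `ℤ[C₅]`. -/
theorem example_C5_relator :
    let C₅ := Multiplicative (ZMod 5)
    let G := Monoid.Coprod C₅ (FreeGroup Unit)
    let x : G := Monoid.Coprod.inr (FreeGroup.of ())
    let g : G := Monoid.Coprod.inl (Multiplicative.ofAdd (1 : ZMod 5))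
    let r : G := x * (g * x⁻¹ * g⁻¹) * (g ^ 2 * x * (g ^ 2)⁻¹)
    let gs : Fin 3 → C₅ :=
      ![1, Multiplicative.ofAdd (1 : ZMod 5), Multiplicative.ofAdd (2 : ZMod 5)]
    let εs : Fin 3 → ℤ := ![1, -1, 1]
    let a : MonoidAlgebra ℤ C₅ := MonoidAlgebra.of ℤ C₅ (Multiplicative.ofAdd (1 : ZMod 5))
    r = (List.ofFn (fun k : Fin 3 =>
        Monoid.Coprod.inl (gs k) * x ^ (εs k) * (Monoid.Coprod.inl (gs k))⁻¹)).prod ∧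
    r ∈ Subgroup.normalClosure {x} ∧
    (∑ k : Fin 3, MonoidAlgebra.single (gs k) (εs k)) = 1 - a + a ^ 2 ∧
    IsUnit (1 - a + a ^ 2) := by
  intro C₅ G x g r gs εs a
  have hr : r = (List.ofFn (fun k : Fin 3 =>
      Monoid.Coprod.inl (gs k) * x ^ (εs k) * (Monoid.Coprod.inl (gs k))⁻¹)).prod := by
    have hg2 : g ^ 2 = Monoid.Coprod.inl (Multiplicative.ofAdd (2 : ZMod 5)) :=
      (map_pow (Monoid.Coprod.inl : C₅ →* G) _ 2).symm
    simp only [r, g, gs, εs, hg2, List.ofFn_succ, List.ofFn_zero, List.prod_cons, List.prod_nil,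
      Matrix.cons_val_zero, Matrix.cons_val_succ, Matrix.cons_val_fin_one, map_one, zpow_ofNat,
      pow_one, inv_one, mul_one, one_mul, mul_assoc]
    rw [zpow_neg_one]
  have hpow (n : ℕ) : a ^ n = MonoidAlgebra.single (Multiplicative.ofAdd (n : ZMod 5)) 1 := by
    rw [← map_pow, ← ofAdd_nsmul, nsmul_one]
    rfl
  refine ⟨hr, hr ▸ Subgroup.list_prod_conj_zpow_mem_normalClosure _ _ _, ?_,
    isUnit_one_sub_add_sq_of_pow_five_eq_one ?_⟩
  · have ha : a = MonoidAlgebra.single (Multiplicative.ofAdd 1) 1 := by simpa using hpow 1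
    rw [Fin.sum_univ_three, hpow 2, ha]
    simp only [gs, εs, Matrix.cons_val_zero, Matrix.cons_val_one, Matrix.cons_val,
      MonoidAlgebra.single_neg, MonoidAlgebra.one_def, Nat.cast_ofNat]
    abel
  · rw [hpow 5]
    rfl
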